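/- arXiv:1110.2407 — 2 statements merged into one kernel-verified Lean document; each statement's English description precedes it below -/
import Mathlib

section
/- In any GK-model, the double negation shift schemes ¬¬□φ → □¬¬φ and ◇¬¬φ → ¬¬◇φ are valid. -/
/-! Gödel double negation is crisp: `¬¬a` is `1` when `a > 0` and `0` otherwise. Hence
`¬¬□φ → □¬¬φ` only needs: if `⨅ y, S x y ⇒ φ y > 0` then every `S x y ⇒ ¬¬φ y` is `1`; this holds
because a positive implication `s ⇒ b` with `b ≤ 0` forces `s ≤ b ≤ 0`. Dually,
`◇¬¬φ → ¬¬◇φ` only needs: if `⨆ y, min (S x y) (φ y) ≤ 0` then every `min (S x y) (¬¬φ y)` is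
`≤ 0`. -/

open scoped Classical

noncomputable def gimp (a b : ℝ) : ℝ := if a ≤ b then 1 else b

inductive GForm : Type where
  | bot : GForm
  | var : ℕ → GForm
  | and : GForm → GForm → GForm
  | or : GForm → GForm → GForm
  | imp : GForm → GForm → GForm
  | box : GForm → GForm
  | dia : GForm → GForm

def GForm.neg (φ : GForm) : GForm := φ.imp .bot

noncomputable def ev {W : Type} (S : W → W → ℝ) (e : ℕ → W → ℝ) : GForm → W → ℝ
  | .bot, _ => 0
  | .var p, x => e p x
  | .and φ ψ, x => min (ev S e φ x) (ev S e ψ x)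
  | .or φ ψ, x => max (ev S e φ x) (ev S e ψ x)
  | .imp φ ψ, x => gimp (ev S e φ x) (ev S e ψ x)
  | .box φ, x => ⨅ y, gimp (S x y) (ev S e φ y)
  | .dia φ, x => ⨆ y, min (S x y) (ev S e φ y)

noncomputable def gneg (a : ℝ) : ℝ := gimp a 0

section Algebra

variable {a b c s : ℝ}

lemma gimp_of_le (h : a ≤ b) : gimp a b = 1 := if_pos h

lemma gimp_of_lt (h : b < a) : gimp a b = b := if_neg h.not_ge

lemma gimp_one_right (a : ℝ) : gimp a 1 = 1 := by
  unfold gimp; split_ifs <;> rfl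

lemma gimp_nonneg (hb : 0 ≤ b) : 0 ≤ gimp a b := by
  unfold gimp; split_ifs <;> linarith

lemma gneg_gneg_eq_ite (a : ℝ) : gneg (gneg a) = if 0 < a then 1 else 0 := by
  unfold gneg gimp; split_ifs <;> linarith

lemma gneg_gneg_nonneg : 0 ≤ gneg (gneg a) := by
  rw [gneg_gneg_eq_ite]; split_ifs <;> norm_num

lemma gneg_gneg_le_one : gneg (gneg a) ≤ 1 := by
  rw [gneg_gneg_eq_ite]; split_ifs <;> norm_num

lemma gneg_gneg_le (hc : 0 ≤ c) (h : 0 < a → 1 ≤ c) : gneg (gneg a) ≤ c := by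
  rw [gneg_gneg_eq_ite]; split_ifs with ha
  exacts [h ha, hc]

lemma le_gneg_gneg (hc : c ≤ 1) (h : a ≤ 0 → c ≤ 0) : c ≤ gneg (gneg a) := by
  rw [gneg_gneg_eq_ite]; split_ifs with ha
  exacts [hc, h (not_lt.1 ha)]

lemma gimp_gneg_gneg_eq_one_of_pos (h : 0 < gimp s b) : gimp s (gneg (gneg b)) = 1 := by
  rw [gneg_gneg_eq_ite]
  split_ifs with hb
  · exact gimp_one_right s
  · have hsb : s ≤ b := le_of_not_gt fun hbs => by linarith [gimp_of_lt hbs]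
    exact gimp_of_le (hsb.trans (not_lt.1 hb))

lemma min_gneg_gneg_nonpos (h : min s b ≤ 0) : min s (gneg (gneg b)) ≤ 0 := by
  rcases min_le_iff.1 h with hs | hb
  · exact min_le_of_left_le hs
  · rw [gneg_gneg_eq_ite, if_neg (not_lt.2 hb)]
    exact min_le_right _ _

end Algebra

-- A real `⨅` of a family that is not bounded below is `0`, so a positive infimum bounds every term.
lemma Real.pos_of_iInf_pos {ι : Sort*} {f : ι → ℝ} (h : 0 < ⨅ i, f i) (i : ι) : 0 < f i := by
  by_cases hf : BddBelow (Set.range f)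
  · exact h.trans_le (ciInf_le hf i)
  · rw [Real.iInf_of_not_bddBelow hf] at h
    exact (lt_irrefl 0 h).elim

section Semantics

variable {W : Type} (S : W → W → ℝ) (e : ℕ → W → ℝ)

lemma ev_neg (φ : GForm) (x : W) : ev S e φ.neg x = gneg (ev S e φ x) := rfl

lemma ev_imp_eq_one_of_le {φ ψ : GForm} {x : W} (h : ev S e φ x ≤ ev S e ψ x) :
    ev S e (.imp φ ψ) x = 1 :=
  gimp_of_le h

theorem ev_neg_neg_box_le (φ : GForm) (x : W) :
    ev S e φ.box.neg.neg x ≤ ev S e φ.neg.neg.box x := by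
  have : Nonempty W := ⟨x⟩
  simp only [ev_neg, ev]
  refine gneg_gneg_le (Real.iInf_nonneg fun y => gimp_nonneg gneg_gneg_nonneg) fun h => ?_
  have hone : ∀ y, gimp (S x y) (gneg (gneg (ev S e φ y))) = 1 :=
    fun y => gimp_gneg_gneg_eq_one_of_pos (Real.pos_of_iInf_pos h y)
  simp only [hone, ciInf_const, le_refl]

theorem ev_dia_neg_neg_le (φ : GForm) (x : W) (hS : ∀ y, S x y ≤ 1) :
    ev S e φ.neg.neg.dia x ≤ ev S e φ.dia.neg.neg x := by
  have : Nonempty W := ⟨x⟩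
  simp only [ev_neg, ev]
  refine le_gneg_gneg (ciSup_le fun y => (min_le_right _ _).trans gneg_gneg_le_one) fun h => ?_
  have hbdd : BddAbove (Set.range fun y => min (S x y) (ev S e φ y)) :=
    ⟨1, by rintro _ ⟨y, rfl⟩; exact min_le_of_left_le (hS y)⟩
  exact ciSup_le fun y => min_gneg_gneg_nonpos ((le_ciSup hbdd y).trans h)

end Semantics

theorem stmt5_general (W : Type) (S : W → W → ℝ) (e : ℕ → W → ℝ)
    (hS : ∀ x y, S x y ∈ Set.Icc (0:ℝ) 1)
    (φ : GForm) (x : W) :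
    ev S e (.imp (GForm.neg (GForm.neg (.box φ))) (.box (GForm.neg (GForm.neg φ)))) x = 1 ∧
    ev S e (.imp (.dia (GForm.neg (GForm.neg φ))) (GForm.neg (GForm.neg (.dia φ)))) x = 1 :=
  ⟨ev_imp_eq_one_of_le S e (ev_neg_neg_box_le S e φ x),
    ev_imp_eq_one_of_le S e (ev_dia_neg_neg_le S e φ x fun y => (hS x y).2)⟩

theorem stmt5 (W : Type) [Nonempty W] (S : W → W → ℝ) (e : ℕ → W → ℝ)
    (hS : ∀ x y, S x y ∈ Set.Icc (0:ℝ) 1) (he : ∀ p x, e p x ∈ Set.Icc (0:ℝ) 1)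
    (φ : GForm) (x : W) :
    ev S e (.imp (GForm.neg (GForm.neg (.box φ))) (.box (GForm.neg (GForm.neg φ)))) x = 1 ∧
    ev S e (.imp (.dia (GForm.neg (GForm.neg φ))) (GForm.neg (GForm.neg (.dia φ)))) x = 1 :=
  stmt5_general W S e hS φ x
end

section
/- For any cardinal κ strictly greater than the cardinality of a linearly ordered Heyting algebra H, the theory T = {(p_β → p_α) → q : α < β < κ} semantically entails q over H-valued valuations (any valuation making all formulas of T equal to 1 makes q equal to 1), but no finite subset of T entails q over [0,1]-valued valuations. Hence Gödel-Dummett logic is not strongly complete for theories of arbitrary cardinality over any fixed linearly ordered Heyting algebra. -/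
/-! If every formula `(p_β → p_α) → q` with `α < β` is true while `q` is not, then each
`p_β → p_α` must fail, which in a linearly ordered Heyting algebra means `v(p_α) < v(p_β)`:
the valuation is a strictly increasing, hence injective, map from `ι` into `H`, impossible
when `#H < #ι`. A finite subset mentions only finitely many indices `α`; ranking them
inside a finite chain `0 < 1/(n+1) < ⋯ < n/(n+1)` and putting `v(q) = n/(n+1)` satisfies
all its formulas in the Gödel algebra `[0,1]` while `v(q) < 1`. -/

open scoped Classical

open Finset

section Heyting

variable {H : Type*} [HeytingAlgebra H]

theorem not_le_of_himp_himp_eq_top {a b q : H} (h : (b ⇨ a) ⇨ q = ⊤) (hq : q ≠ ⊤) :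
    ¬b ≤ a := fun hba => hq <| by rwa [himp_eq_top_iff.2 hba, top_himp] at h

theorem strictMono_of_forall_himp_himp_eq_top {ι : Type*} [Preorder ι]
    (htot : ∀ a b : H, a ≤ b ∨ b ≤ a) {v : ι → H} {q : H}
    (h : ∀ α β : ι, α < β → (v β ⇨ v α) ⇨ q = ⊤) (hq : q ≠ ⊤) : StrictMono v := by
  intro α β hαβ
  have hβα := not_le_of_himp_himp_eq_top (h α β hαβ) hq
  exact lt_of_le_not_ge ((htot _ _).resolve_right hβα) hβα

end Heyting

theorem card_filter_lt_lt_card_filter_lt {ι : Type*} [LinearOrder ι] {S : Finset ι}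
    {α β : ι} (hα : α ∈ S) (hαβ : α < β) : #(S.filter (· < α)) < #(S.filter (· < β)) := by
  refine card_lt_card ((ssubset_iff_of_subset ?_).2 ⟨α, ?_, ?_⟩)
  · intro x hx
    simp only [mem_filter] at hx ⊢
    exact ⟨hx.1, hx.2.trans hαβ⟩
  · exact mem_filter.2 ⟨hα, hαβ⟩
  · simp

theorem gimp_gimp_eq_one {x y q : ℝ} (hxy : x < y) (hxq : x ≤ q) : gimp (gimp y x) q = 1 := by
  simp only [gimp, if_neg hxy.not_ge, if_pos hxq]

noncomputable def scaledRank {ι : Type*} [LinearOrder ι] (S : Finset ι) (α : ι) : ℝ :=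
  #(S.filter (· < α)) / (#S + 1)

section scaledRank

variable {ι : Type*} [LinearOrder ι] (S : Finset ι)

theorem scaledRank_nonneg (α : ι) : 0 ≤ scaledRank S α := by
  unfold scaledRank; positivity

theorem scaledRank_le (α : ι) : scaledRank S α ≤ #S / (#S + 1) :=
  div_le_div_of_nonneg_right (mod_cast card_filter_le S (· < α)) (by positivity)

theorem scaledRank_lt_scaledRank {α β : ι} (hα : α ∈ S) (hαβ : α < β) :
    scaledRank S α < scaledRank S β :=
  div_lt_div_of_pos_right (mod_cast card_filter_lt_lt_card_filter_lt hα hαβ) (by positivity)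

end scaledRank

theorem stmt17 (H : Type) [HeytingAlgebra H]
    (htot : ∀ a b : H, a ≤ b ∨ b ≤ a)
    (ι : Type) [LinearOrder ι] (hκ : Cardinal.mk H < Cardinal.mk ι) :
    (∀ (vp : ι → H) (vq : H),
        (∀ α β : ι, α < β → ((vp β ⇨ vp α) ⇨ vq) = ⊤) → vq = ⊤) ∧
    (∀ Δ : Finset (ι × ι),
        ∃ (vp : ι → ℝ) (vq : ℝ),
          (∀ α, vp α ∈ Set.Icc (0:ℝ) 1) ∧ vq ∈ Set.Icc (0:ℝ) 1 ∧ vq < 1 ∧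
          ∀ pr ∈ Δ, pr.1 < pr.2 → gimp (gimp (vp pr.2) (vp pr.1)) vq = 1) := by
  refine ⟨fun vp vq h => ?_, fun Δ => ?_⟩
  · by_contra hq
    have hinj := (strictMono_of_forall_himp_himp_eq_top htot h hq).injective
    exact (Cardinal.mk_le_of_injective hinj).not_gt hκ
  · set S := Δ.image Prod.fst
    have hq_lt : (#S : ℝ) / (#S + 1) < 1 := by
      rw [div_lt_one (by positivity)]
      linarith
    refine ⟨scaledRank S, #S / (#S + 1), fun α => ⟨scaledRank_nonneg S α, ?_⟩,
      ⟨by positivity, hq_lt.le⟩, hq_lt, fun pr hpr hlt => ?_⟩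
    · exact (scaledRank_le S α).trans hq_lt.le
    · exact gimp_gimp_eq_one (scaledRank_lt_scaledRank S (mem_image_of_mem _ hpr) hlt)
        (scaledRank_le S pr.1)
end
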